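/- Let (W,S) be a Coxeter system and v, w, x, z ∈ W with v ≤ w and w = xz with ℓ(w) = ℓ(x) + ℓ(z). Then there exists x' ≤ x⁻¹ such that x' v ≤ z. -/

import Mathlib

/-!
Strong exchange comes from Tits' permutation representation of `W` on `W × ZMod 2`: the second
coordinate of `w • (x, 0)` is the parity of the number of occurrences of `x` in the right inversion
sequence of any word for `w`, and it changes under `w ↦ w * t` for a reflection `t`; hence every
right inversion of `π ω` occurs in the right inversion sequence of `ω`. Strong exchange yields the
lifting property of the Bruhat order, and with it the monotonicity of `u ↦ u * s` when `s` is an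
ascent of the upper element.

The theorem then goes by induction on `ℓ x`. Write `x = s x₁` with `ℓ x₁ < ℓ x`; lifting
`v ≤ s (x₁ z)` gives `v ≤ x₁ z` or `s v ≤ x₁ z`, and the element `x'` provided by induction for
`x₁`, respectively `x' * s`, works for `x`: in the second case `x' * s ≤ x₁⁻¹ * s = x⁻¹` by
monotonicity, as `s` is an ascent of `x₁⁻¹`.
-/

namespace CoxeterPaper

open CoxeterSystem

variable {B : Type*} {W : Type*} [Group W] {M : CoxeterMatrix B}

/-- The Bruhat order on a Coxeter group: the reflexive-transitive closure of the
relation `a < a * t` for `t` a reflection with length increasing. -/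
def BruhatLE (cs : CoxeterSystem M W) (x y : W) : Prop :=
  Relation.ReflTransGen
    (fun a b => (∃ t, cs.IsReflection t ∧ b = a * t) ∧ cs.length a < cs.length b) x y

/-- One step of the Demazure product with a simple reflection. -/
noncomputable def demStep (cs : CoxeterSystem M W) (x : W) (i : B) : W :=
  if cs.length x < cs.length (x * cs.simple i) then x * cs.simple i else x

/-- The Demazure product of `x` with the word `l`. -/
noncomputable def demWord (cs : CoxeterSystem M W) (x : W) (l : List B) : W :=
  l.foldl (demStep cs) x

/-- The Demazure product (Coxeter monoid product) of two elements: fold the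
Demazure action of a reduced word of `y` onto `x`. -/
noncomputable def dem (cs : CoxeterSystem M W) (x y : W) : W :=
  demWord cs x (Classical.choose (cs.exists_reduced_word y))

/-- The standard parabolic subgroup attached to a set of simple indices. -/
def parabolic (cs : CoxeterSystem M W) (I : Set B) : Subgroup W :=
  Subgroup.closure (cs.simple '' I)

/-- `I` is finitary if the parabolic subgroup `W_I` is finite. -/
def Finitary (cs : CoxeterSystem M W) (I : Set B) : Prop :=
  (parabolic cs I : Set W).Finite

/-- The double coset `W_I w W_J` as a subset of `W`. -/
def doset (cs : CoxeterSystem M W) (I J : Set B) (w : W) : Set W :=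
  {x | ∃ a ∈ parabolic cs I, ∃ b ∈ parabolic cs J, x = a * w * b}

/-- `p` is an `(I,J)`-double coset. -/
def IsDCoset (cs : CoxeterSystem M W) (I J : Set B) (p : Set W) : Prop :=
  ∃ w, p = doset cs I J w

/-- `m` is the Bruhat-minimal element of `p`. -/
def IsMinOf (cs : CoxeterSystem M W) (p : Set W) (m : W) : Prop :=
  m ∈ p ∧ ∀ x ∈ p, BruhatLE cs m x

/-- `m` is the Bruhat-maximal element of `p`. -/
def IsMaxOf (cs : CoxeterSystem M W) (p : Set W) (m : W) : Prop :=
  m ∈ p ∧ ∀ x ∈ p, BruhatLE cs x m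

/-- `[I 0, …, I d]` is a singlestep expression. -/
def IsSinglestep (I : ℕ → Set B) (d : ℕ) : Prop :=
  ∀ k < d, (∃ s, s ∉ I k ∧ I (k + 1) = insert s (I k)) ∨
    (∃ s, s ∈ I k ∧ I (k + 1) = I k \ {s})

/-- `p` is a path subordinate to the singlestep expression `[I 0, …, I d]`. -/
def IsSubPath (cs : CoxeterSystem M W) (I : ℕ → Set B) (d : ℕ) (p : ℕ → Set W) : Prop :=
  p 0 = doset cs (I 0) (I 0) 1 ∧
  (∀ i ≤ d, IsDCoset cs (I 0) (I i) (p i)) ∧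
  ∀ k < d, (I k ⊆ I (k + 1) → p k ⊆ p (k + 1)) ∧ (I (k + 1) ⊆ I k → p (k + 1) ⊆ p k)

/-- The Demazure product `w_{I_0} * w_{I_1} * ⋯ * w_{I_d}` of the longest elements
`wI 0, …, wI d`. -/
noncomputable def exprMax (cs : CoxeterSystem M W) (wI : ℕ → W) (d : ℕ) : W :=
  ((List.range d).map fun k => wI (k + 1)).foldl (dem cs) (wI 0)


section StrongExchange

variable (cs : CoxeterSystem M W)

local prefix:100 "s " => cs.simple
local prefix:100 "π " => cs.wordProd
local prefix:100 "ℓ " => cs.length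
local prefix:100 "ris " => cs.rightInvSeq

theorem _root_.Finset.sum_range_two_mul {A : Type*} [AddCommMonoid A] (g : ℕ → A) (n : ℕ) :
    ∑ e ∈ Finset.range (2 * n), g e = ∑ a ∈ Finset.range n, (g (2 * a) + g (2 * a + 1)) := by
  induction n with
  | zero => simp
  | succ n ih => rw [Finset.sum_range_succ, ← ih, mul_add, mul_one, Finset.sum_range_succ,
      Finset.sum_range_succ, add_assoc]

theorem pow_apply_of_apply_eq_conj {G A : Type*} [Group G] [AddCommMonoid A]
    (f : Equiv.Perm (G × A)) (g : G) (χ : G → A)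
    (hf : ∀ x ε, f (x, ε) = (g * x * g⁻¹, ε + χ x)) (n : ℕ) (x : G) (ε : A) :
    (f ^ n) (x, ε) = (g ^ n * x * (g ^ n)⁻¹,
      ε + ∑ a ∈ Finset.range n, χ (g ^ a * x * (g ^ a)⁻¹)) := by
  induction n generalizing x ε with
  | zero => simp
  | succ n ih =>
    rw [pow_succ, Equiv.Perm.mul_apply, hf, ih, Finset.sum_range_succ']
    refine Prod.ext (by simp [pow_succ, mul_assoc]) ?_
    simp only [pow_succ, pow_zero, one_mul, inv_one, mul_one, mul_inv_rev, mul_assoc]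
    abel

theorem simple_mul_mul_simple_eq_iff (i : B) (x y : W) : s i * x * s i = y ↔ x = s i * y * s i := by
  constructor <;> rintro rfl <;> simp [mul_assoc]

open scoped Classical in
/-- The generator `s i` of Tits' permutation representation of `W` on `W × ZMod 2`
(Björner–Brenti, Thm. 1.4.3), here acting on all of `W` rather than only on the reflections. -/
noncomputable def flipPerm (i : B) : Equiv.Perm (W × ZMod 2) :=
  Function.Involutive.toPerm (fun p => (s i * p.1 * s i, p.2 + if p.1 = s i then 1 else 0)) <| by
    rintro ⟨x, ε⟩
    have hconj : s i * x * s i = s i ↔ x = s i := by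
      rw [simple_mul_mul_simple_eq_iff]; simp
    ext
    · simp [mul_assoc]
    · by_cases hx : x = s i
      · dsimp only
        rw [if_pos hx, if_pos (hconj.2 hx), add_assoc, CharTwo.add_self_eq_zero, add_zero]
      · simp [hconj, hx]

open scoped Classical in
theorem flipPerm_apply (i : B) (x : W) (ε : ZMod 2) :
    flipPerm cs i (x, ε) = (s i * x * s i, ε + if x = s i then 1 else 0) := rfl

open scoped Classical in
theorem flipPerm_mul_flipPerm_apply (i j : B) (x : W) (ε : ZMod 2) :
    (flipPerm cs i * flipPerm cs j) (x, ε) = (s i * s j * x * (s i * s j)⁻¹,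
      ε + ((if x = s j then 1 else 0) + if x = s j * s i * s j then 1 else 0)) := by
  rw [Equiv.Perm.mul_apply, flipPerm_apply, flipPerm_apply, simple_mul_mul_simple_eq_iff]
  simp [mul_assoc, add_assoc]

theorem isLiftable_flipPerm : M.IsLiftable (flipPerm cs) := by
  classical
  intro i j
  set c := s i * s j
  set d := s j * s i
  have hc_inv : c⁻¹ = d := by simp [c, d]
  have hd : d ^ M i j = 1 := cs.simple_mul_simple_pow' i j
  have hsemiconj (n : ℕ) : s j * c ^ n = d ^ n * s j :=
    SemiconjBy.pow_right (mul_assoc _ _ _).symm n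
  ext ⟨x, ε⟩ : 1
  rw [pow_apply_of_apply_eq_conj _ c _ (flipPerm_mul_flipPerm_apply cs i j),
    cs.simple_mul_simple_pow, one_mul, inv_one, mul_one, Equiv.Perm.one_apply]
  -- `c ^ a` conjugates `x` onto `s j` (resp. `s j * s i * s j`) iff `x = d ^ (2a) * s j`
  -- (resp. `d ^ (2a+1) * s j`), and `e ↦ d ^ e * s j` has period `M i j`.
  let g : ℕ → ZMod 2 := fun e => if x = d ^ e * s j then 1 else 0
  have hterm (a : ℕ) : ((if c ^ a * x * (c ^ a)⁻¹ = s j then 1 else 0) +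
      if c ^ a * x * (c ^ a)⁻¹ = s j * s i * s j then 1 else 0) = g (2 * a) + g (2 * a + 1) := by
    have hconj (y : W) : c ^ a * x * (c ^ a)⁻¹ = y ↔ x = (c ^ a)⁻¹ * y * c ^ a := by
      constructor <;> rintro rfl <;> group
    have heven : d ^ a * s j * c ^ a = d ^ (2 * a) * s j := by
      rw [mul_assoc, hsemiconj, ← mul_assoc, ← pow_add, two_mul]
    have hodd : d ^ a * (s j * s i * s j) * c ^ a = d ^ (2 * a + 1) * s j := by
      rw [show s j * s i * s j = d * s j from rfl, ← mul_assoc, ← pow_succ, mul_assoc, hsemiconj,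
        ← mul_assoc, ← pow_add]
      ring_nf
    rw [hconj, hconj, ← inv_pow, hc_inv, heven, hodd]
  have hperiodic (e : ℕ) : g (M i j + e) = g e := by
    simp only [g, pow_add, hd, one_mul]
  rw [Finset.sum_congr rfl fun a _ => hterm a, ← Finset.sum_range_two_mul, two_mul,
    Finset.sum_range_add]
  simp only [hperiodic, CharTwo.add_self_eq_zero, add_zero]

noncomputable def flipRep : W →* Equiv.Perm (W × ZMod 2) :=
  cs.lift ⟨flipPerm cs, isLiftable_flipPerm cs⟩

theorem flipRep_simple (i : B) : flipRep cs (s i) = flipPerm cs i :=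
  cs.lift_apply_simple (isLiftable_flipPerm cs) i

open scoped Classical in
theorem flipRep_wordProd (ω : List B) (x : W) (ε : ZMod 2) :
    flipRep cs (π ω) (x, ε) = (π ω * x * (π ω)⁻¹, ε + (ris ω).count x) := by
  induction ω with
  | nil => simp
  | cons i ω ih =>
    have hconj : π ω * x * (π ω)⁻¹ = s i ↔ (π ω)⁻¹ * s i * π ω = x := by
      constructor <;> intro h <;> rw [← h] <;> group
    rw [cs.wordProd_cons, map_mul, Equiv.Perm.mul_apply, ih, flipRep_simple, flipPerm_apply,
      CoxeterSystem.rightInvSeq.eq_2, List.count_cons]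
    ext
    · simp [mul_assoc]
    · simp [hconj, add_assoc]

/-- The parity of the number of occurrences of `x` in the right inversion sequence of any word
for `w`. -/
noncomputable def invParity (w x : W) : ZMod 2 := (flipRep cs w (x, 0)).2

open scoped Classical in
theorem invParity_wordProd (ω : List B) (x : W) : invParity cs (π ω) x = (ris ω).count x := by
  simp [invParity, flipRep_wordProd]

theorem flipRep_apply (w x : W) (ε : ZMod 2) :
    flipRep cs w (x, ε) = (w * x * w⁻¹, ε + invParity cs w x) := by
  obtain ⟨ω, rfl⟩ := cs.wordProd_surjective w
  simp [invParity, flipRep_wordProd]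

theorem invParity_mul (w₁ w₂ x : W) :
    invParity cs (w₁ * w₂) x = invParity cs w₂ x + invParity cs w₁ (w₂ * x * w₂⁻¹) := by
  rw [invParity, map_mul, Equiv.Perm.mul_apply, flipRep_apply cs w₂, flipRep_apply]
  simp

theorem invParity_one (x : W) : invParity cs 1 x = 0 := by
  simp [invParity]

theorem invParity_simple_self (i : B) : invParity cs (s i) (s i) = 1 := by
  simp [invParity, flipRep_simple, flipPerm_apply]

theorem invParity_self {t : W} (ht : cs.IsReflection t) : invParity cs t t = 1 := by
  obtain ⟨u, i, rfl⟩ := ht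
  have hcancel := invParity_mul cs u u⁻¹ (u * s i * u⁻¹)
  rw [mul_inv_cancel, invParity_one] at hcancel
  have hu : u⁻¹ * (u * s i * u⁻¹) * u⁻¹⁻¹ = s i := by group
  rw [hu] at hcancel
  rw [invParity_mul, invParity_mul, hu, mul_inv_cancel_right, invParity_simple_self]
  linear_combination -hcancel

theorem invParity_mul_self {t : W} (ht : cs.IsReflection t) (w : W) :
    invParity cs (w * t) t = invParity cs w t + 1 := by
  rw [invParity_mul, invParity_self cs ht, mul_inv_cancel_right, add_comm]

theorem mem_rightInvSeq_of_invParity_ne_zero {ω : List B} {x : W}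
    (h : invParity cs (π ω) x ≠ 0) : x ∈ ris ω := by
  classical
  by_contra hx
  simp [invParity_wordProd, List.count_eq_zero.2 hx] at h

theorem isRightInversion_of_invParity_ne_zero {w t : W} (h : invParity cs w t ≠ 0) :
    cs.IsRightInversion w t := by
  obtain ⟨ω, hω, rfl⟩ := cs.exists_isReduced w
  exact cs.isRightInversion_of_mem_rightInvSeq hω (mem_rightInvSeq_of_invParity_ne_zero cs h)

theorem invParity_eq_one_of_isRightInversion {w t : W} (ht : cs.IsRightInversion w t) :
    invParity cs w t = 1 := by
  by_contra h
  have hwt : invParity cs (w * t) t ≠ 0 := by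
    rw [invParity_mul_self cs ht.1]
    revert h
    generalize invParity cs w t = a
    decide +revert
  have := (isRightInversion_of_invParity_ne_zero cs hwt).2
  rw [mul_assoc, ht.1.mul_self, mul_one] at this
  exact lt_asymm this ht.2

/-- The strong exchange property. -/
theorem mem_rightInvSeq_of_isRightInversion (ω : List B) {t : W}
    (ht : cs.IsRightInversion (π ω) t) : t ∈ ris ω :=
  mem_rightInvSeq_of_invParity_ne_zero cs (by simp [invParity_eq_one_of_isRightInversion cs ht])

end StrongExchange

section Bruhat

variable {cs : CoxeterSystem M W}

local prefix:100 "s " => cs.simple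
local prefix:100 "π " => cs.wordProd
local prefix:100 "ℓ " => cs.length

theorem BruhatLE.refl (u : W) : BruhatLE cs u u := Relation.ReflTransGen.refl

theorem BruhatLE.trans {u v w : W} (huv : BruhatLE cs u v) (hvw : BruhatLE cs v w) :
    BruhatLE cs u w :=
  Relation.ReflTransGen.trans huv hvw

theorem bruhatLE_mul_of_length_lt {u t : W} (ht : cs.IsReflection t) (hlt : ℓ u < ℓ (u * t)) :
    BruhatLE cs u (u * t) :=
  Relation.ReflTransGen.single ⟨⟨t, ht, rfl⟩, hlt⟩

theorem bruhatLE_mul_simple_of_length_lt {u : W} {i : B} (hlt : ℓ u < ℓ (u * s i)) :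
    BruhatLE cs u (u * s i) :=
  bruhatLE_mul_of_length_lt (cs.isReflection_simple i) hlt

theorem bruhatLE_mul_of_isRightInversion {w t : W} (h : cs.IsRightInversion w t) :
    BruhatLE cs (w * t) w := by
  have hwtt : w * t * t = w := by rw [mul_assoc, h.1.mul_self, mul_one]
  have hstep := bruhatLE_mul_of_length_lt (u := w * t) h.1 (by rw [hwtt]; exact h.2)
  rwa [hwtt] at hstep

theorem BruhatLE.inv {u v : W} (h : BruhatLE cs u v) : BruhatLE cs u⁻¹ v⁻¹ := by
  induction h with
  | refl => exact .refl _
  | @tail b c _ hbc ih =>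
    obtain ⟨⟨t, ht, rfl⟩, hlt⟩ := hbc
    have hbt : (b * t)⁻¹ = b⁻¹ * (b * t * b⁻¹) := by rw [mul_inv_rev, ht.inv]; group
    refine ih.trans (Relation.ReflTransGen.single ⟨⟨b * t * b⁻¹, ht.conj b, hbt⟩, ?_⟩)
    rwa [cs.length_inv, cs.length_inv]

theorem mul_eq_or_bruhatLE_of_isRightInversion {w t : W} (ht : cs.IsRightInversion w t) (i : B) :
    w * t = w * s i ∨ BruhatLE cs (w * t * s i) (w * s i) := by
  obtain ⟨ω, hω, hωw⟩ := cs.exists_isReduced (w * s i)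
  have hw : π (ω.concat i) = w := by
    rw [cs.wordProd_concat, ← hωw, cs.simple_mul_simple_cancel_right]
  rw [← hw] at ht
  have hmem := mem_rightInvSeq_of_isRightInversion cs _ ht
  rw [cs.rightInvSeq_concat, List.concat_eq_append, List.mem_append, List.mem_singleton,
    List.mem_map] at hmem
  rcases hmem with ⟨r, hr, rfl⟩ | rfl
  · right
    have hr_inv := cs.isRightInversion_of_mem_rightInvSeq hω hr
    rw [← hωw] at hr_inv
    have hstep : w * (MulAut.conj (s i)) r * s i = w * s i * r := by
      simp [mul_assoc]
    rw [hstep]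
    exact bruhatLE_mul_of_isRightInversion hr_inv
  · exact .inl rfl

theorem BruhatLE.le_mul_simple_or_mul_simple_le {v w : W} (h : BruhatLE cs v w) (i : B) :
    BruhatLE cs v (w * s i) ∨ BruhatLE cs (v * s i) (w * s i) := by
  induction h using Relation.ReflTransGen.head_induction_on with
  | refl => exact .inr (.refl _)
  | @head v b hvb hbw ih =>
    obtain ⟨⟨t, ht, rfl⟩, hlt⟩ := hvb
    have hvb : BruhatLE cs v (v * t) := bruhatLE_mul_of_length_lt ht hlt
    rcases ih with hle | hle
    · exact .inl (hvb.trans hle)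
    rcases cs.length_mul_simple (v * t) i with hasc | hdesc
    · exact .inl (hvb.trans ((bruhatLE_mul_simple_of_length_lt (by omega)).trans hle))
    have hvtt : v * t * t = v := by rw [mul_assoc, ht.mul_self, mul_one]
    have hinv : cs.IsRightInversion (v * t) t := ⟨ht, by rwa [hvtt]⟩
    rcases mul_eq_or_bruhatLE_of_isRightInversion hinv i with heq | hle'
    · rw [hvtt] at heq
      exact .inl (heq ▸ hle)
    · rw [hvtt] at hle'
      exact .inr (hle'.trans hle)

theorem BruhatLE.mul_simple {u y : W} (h : BruhatLE cs u y) {i : B}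
    (hi : ℓ y < ℓ (y * s i)) : BruhatLE cs (u * s i) (y * s i) := by
  induction hn : ℓ y using Nat.strong_induction_on generalizing u y with
  | _ n ih =>
  subst hn
  rcases h.cases_tail with rfl | ⟨c, huc, ⟨t, ht, rfl⟩, hlt⟩
  · exact .refl _
  have hc_len := cs.length_mul_simple c i
  have hconj : c * t * s i = c * s i * (s i * t * s i) := by simp [mul_assoc]
  have hcy : BruhatLE cs (c * s i) (c * t * s i) := by
    rw [hconj]
    refine bruhatLE_mul_of_length_lt (by simpa using ht.conj (s i)) ?_
    rw [← hconj]
    omega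
  rcases hc_len with hasc | hdesc
  · exact (ih _ hlt huc (by omega) rfl).trans hcy
  rcases BruhatLE.le_mul_simple_or_mul_simple_le huc i with hle | hle
  · have hcss : c * s i * s i = c := cs.simple_mul_simple_cancel_right i
    have hus := ih _ (by omega) hle (by rw [hcss]; omega) rfl
    rw [hcss] at hus
    exact hus.trans ((bruhatLE_mul_of_length_lt ht hlt).trans
      (bruhatLE_mul_simple_of_length_lt hi))
  · exact hle.trans hcy

theorem BruhatLE.le_simple_mul_or_simple_mul_le {v w : W} (h : BruhatLE cs v w) (i : B) :
    BruhatLE cs v (s i * w) ∨ BruhatLE cs (s i * v) (s i * w) := by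
  rcases h.inv.le_mul_simple_or_mul_simple_le i with hle | hle
  · exact .inl (by simpa using hle.inv)
  · exact .inr (by simpa using hle.inv)

theorem exists_bruhatLE_inv_of_bruhatLE_mul {x v z : W} (h : BruhatLE cs v (x * z))
    (hl : ℓ (x * z) = ℓ x + ℓ z) : ∃ x', BruhatLE cs x' x⁻¹ ∧ BruhatLE cs (x' * v) z := by
  induction hn : ℓ x generalizing x v with
  | zero =>
    rw [cs.length_eq_zero_iff] at hn
    subst hn
    exact ⟨1, by simpa using BruhatLE.refl 1, by simpa using h⟩
  | succ n ih =>
    obtain ⟨i, hi⟩ := cs.exists_leftDescent_of_ne_one (w := x) (by rintro rfl; simp at hn)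
    obtain ⟨x₁, rfl⟩ : ∃ x₁, x = s i * x₁ := ⟨s i * x, (cs.simple_mul_simple_cancel_left i).symm⟩
    rw [CoxeterSystem.IsLeftDescent, cs.simple_mul_simple_cancel_left] at hi
    have hx₁ := cs.length_simple_mul x₁ i
    have hl₁ : ℓ (x₁ * z) = ℓ x₁ + ℓ z := by
      have := cs.length_mul_le x₁ z
      have := cs.length_simple_mul (x₁ * z) i
      rw [mul_assoc] at hl
      omega
    have hx_inv : (s i * x₁)⁻¹ = x₁⁻¹ * s i := by rw [mul_inv_rev, cs.inv_simple]
    have hx₁_inv : ℓ x₁⁻¹ < ℓ (x₁⁻¹ * s i) := by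
      rwa [← hx_inv, cs.length_inv, cs.length_inv]
    rw [mul_assoc] at h
    rcases h.le_simple_mul_or_simple_mul_le i with hle | hle <;>
      rw [cs.simple_mul_simple_cancel_left] at hle <;>
      obtain ⟨x', hx', hx'v⟩ := ih hle hl₁ (by omega)
    · exact ⟨x', hx_inv ▸ hx'.trans (bruhatLE_mul_simple_of_length_lt hx₁_inv), hx'v⟩
    · exact ⟨x' * s i, hx_inv ▸ hx'.mul_simple hx₁_inv, by rwa [mul_assoc]⟩

end Bruhat

/-- Second lifting lemma: if `v ≤ w` and `w = x * z` reduced, then there is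
`x' ≤ x⁻¹` with `x' * v ≤ z`. -/
theorem lifting_two_left (cs : CoxeterSystem M W) (v w x z : W) (h : BruhatLE cs v w)
    (hw : w = x * z) (hl : cs.length w = cs.length x + cs.length z) :
    ∃ x', BruhatLE cs x' x⁻¹ ∧ BruhatLE cs (x' * v) z := by
  subst hw
  exact exists_bruhatLE_inv_of_bruhatLE_mul h hl

end CoxeterPaper
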